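/- arXiv:1509.08453 — 5 statements merged into one kernel-verified Lean document; each statement's English description precedes it below -/
import Mathlib

section
/- Let C be a triangulated category equipped with a weight structure w, let m ≤ n be integers and let g : M → N be a morphism in C. Then g kills weights m,…,n if and only if for EVERY n-weight decomposition w_{≤n}M → M → w_{≥n+1}M → (w_{≤n}M)[1] of M and EVERY (m−1)-weight decomposition w_{≤m−1}N → N → w_{≥m}N → (w_{≤m−1}N)[1] of N there exist morphisms h : w_{≤n}M → w_{≤m−1}N and j : w_{≥n+1}M → w_{≥m}N such that (h, g, j) is a morphism of distinguished triangles (i.e. all three squares, including the one involving the connecting morphisms and h[1], commute). -/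
open CategoryTheory CategoryTheory.Limits CategoryTheory.Pretriangulated ZeroObject

universe v u

variable (C : Type u) [Category.{v} C] [HasZeroObject C] [Preadditive C] [HasShift C ℤ]
  [∀ n : ℤ, (shiftFunctor C n).Additive] [Pretriangulated C]

/-- A weight structure on a triangulated category `C`: a pair of retract-closed classes
`le = C_{w≤0}` and `ge = C_{w≥0}` satisfying semi-invariance with respect to translations,
orthogonality, and the existence of weight decompositions. -/
structure WeightStructure where
  /-- the class `C_{w≤0}` -/
  le : Set C
  /-- the class `C_{w≥0}` -/
  ge : Set C
  /-- `C_{w≤0}` is closed under retracts -/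
  le_retract : ∀ ⦃X Y : C⦄ (i : X ⟶ Y) (r : Y ⟶ X), i ≫ r = 𝟙 X → le Y → le X
  /-- `C_{w≥0}` is closed under retracts -/
  ge_retract : ∀ ⦃X Y : C⦄ (i : X ⟶ Y) (r : Y ⟶ X), i ≫ r = 𝟙 X → ge Y → ge X
  /-- `C_{w≤0} ⊆ C_{w≤0}[1]`, i.e. `X ∈ C_{w≤0} → X[-1] ∈ C_{w≤0}` -/
  le_shift : ∀ ⦃X : C⦄, le X → le ((shiftFunctor C (-1 : ℤ)).obj X)
  /-- `C_{w≥0}[1] ⊆ C_{w≥0}`, i.e. `X ∈ C_{w≥0} → X[1] ∈ C_{w≥0}` -/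
  ge_shift : ∀ ⦃X : C⦄, ge X → ge ((shiftFunctor C (1 : ℤ)).obj X)
  /-- orthogonality: `Hom(X, Y[1]) = 0` for `X ∈ C_{w≤0}`, `Y ∈ C_{w≥0}` -/
  orth : ∀ ⦃X Y : C⦄, le X → ge Y → ∀ f : X ⟶ (shiftFunctor C (1 : ℤ)).obj Y, f = 0
  /-- existence of weight decompositions -/
  decomp : ∀ M : C, ∃ (X Y : C) (f : X ⟶ M) (g : M ⟶ Y)
      (h : Y ⟶ (shiftFunctor C (1 : ℤ)).obj X),
      Triangle.mk f g h ∈ (distTriang C) ∧ le X ∧ ge ((shiftFunctor C (-1 : ℤ)).obj Y)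

variable {C}

namespace WeightStructure

/-- `X ∈ C_{w≤i} = C_{w≤0}[i]`, i.e. `X[-i] ∈ C_{w≤0}`. -/
def leDeg (w : WeightStructure C) (i : ℤ) (X : C) : Prop :=
  w.le ((shiftFunctor C (-i)).obj X)

/-- `X ∈ C_{w≥i} = C_{w≥0}[i]`, i.e. `X[-i] ∈ C_{w≥0}`. -/
def geDeg (w : WeightStructure C) (i : ℤ) (X : C) : Prop :=
  w.ge ((shiftFunctor C (-i)).obj X)

/-- The triangle `A → M → B → A[1]` is an `m`-weight decomposition of `M`:
it is distinguished, `A ∈ C_{w≤m}` and `B ∈ C_{w≥m+1}`. -/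
def IsWeightDecomp (w : WeightStructure C) (m : ℤ) {A M B : C}
    (f : A ⟶ M) (g : M ⟶ B) (h : B ⟶ (shiftFunctor C (1 : ℤ)).obj A) : Prop :=
  Triangle.mk f g h ∈ (distTriang C) ∧ w.leDeg m A ∧ w.geDeg (m + 1) B

/-- `g : M ⟶ N` kills weights `m,…,n`: there exist an `n`-weight decomposition of `M` and an
`(m-1)`-weight decomposition of `N` such that the composite `w_{≤n}M → M → N → w_{≥m}N` is `0`. -/
def KillsWeights (w : WeightStructure C) (m n : ℤ) {M N : C} (g : M ⟶ N) : Prop :=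
  ∃ (A B A' B' : C) (f : A ⟶ M) (p : M ⟶ B) (δ : B ⟶ (shiftFunctor C (1 : ℤ)).obj A)
    (f' : A' ⟶ N) (p' : N ⟶ B') (δ' : B' ⟶ (shiftFunctor C (1 : ℤ)).obj A'),
    w.IsWeightDecomp n f p δ ∧ w.IsWeightDecomp (m - 1) f' p' δ' ∧ f ≫ g ≫ p' = 0

/-- `M` is without weights `m,…,n` if `𝟙 M` kills weights `m,…,n`. -/
def WithoutWeights (w : WeightStructure C) (m n : ℤ) (M : C) : Prop :=
  w.KillsWeights m n (𝟙 M)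

end WeightStructure

/-!
By orthogonality, the first leg `w_{≤n}M → M` of any `n`-weight decomposition of `M` factors
through that of any other, and dually the second leg `N → w_{≥m}N` of any `(m-1)`-weight
decomposition of `N` factors through that of any other. Hence the vanishing of the composite
`w_{≤n}M → M → N → w_{≥m}N` does not depend on the chosen decompositions. For a pair of
distinguished triangles, this vanishing is exactly what lets `g` restrict to a map `h` of first
terms, and the completion axiom of triangulated categories then supplies `j`.
-/

namespace CategoryTheory.Pretriangulated

lemma comp_mor₂_eq_zero_iff_exists_triangle_morphism {T T' : Triangle C}
    (hT : T ∈ distTriang C) (hT' : T' ∈ distTriang C) (g : T.obj₂ ⟶ T'.obj₂) :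
    T.mor₁ ≫ g ≫ T'.mor₂ = 0 ↔
      ∃ (h : T.obj₁ ⟶ T'.obj₁) (j : T.obj₃ ⟶ T'.obj₃),
        T.mor₁ ≫ g = h ≫ T'.mor₁ ∧ T.mor₂ ≫ j = g ≫ T'.mor₂ ∧
          T.mor₃ ≫ (shiftFunctor C (1 : ℤ)).map h = j ≫ T'.mor₃ := by
  constructor
  · intro hz
    obtain ⟨h, hh⟩ := T'.coyoneda_exact₂ hT' (T.mor₁ ≫ g) (by rw [Category.assoc, hz])
    obtain ⟨j, hj₂, hj₃⟩ := complete_distinguished_triangle_morphism _ _ hT hT' h g hh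
    exact ⟨h, j, hh, hj₂, hj₃⟩
  · rintro ⟨h, -, hh, -, -⟩
    rw [← Category.assoc, hh, Category.assoc, comp_distTriang_mor_zero₁₂ _ hT', comp_zero]

lemma distinguished_of_iso_obj₂ (T : Triangle C) (hT : T ∈ distTriang C) {M : C}
    (e : T.obj₂ ≅ M) : Triangle.mk (T.mor₁ ≫ e.hom) (e.inv ≫ T.mor₂) T.mor₃ ∈ distTriang C :=
  isomorphic_distinguished _ hT _
    (Triangle.isoMk _ _ (Iso.refl _) e.symm (Iso.refl _)
      (by change (T.mor₁ ≫ e.hom) ≫ e.inv = 𝟙 T.obj₁ ≫ T.mor₁; simp) (Category.comp_id _)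
      (by change T.mor₃ ≫ (shiftFunctor C 1).map (𝟙 T.obj₁) = 𝟙 T.obj₃ ≫ T.mor₃; simp))

end CategoryTheory.Pretriangulated

namespace WeightStructure

variable (w : WeightStructure C)

lemma le_of_iso {X Y : C} (e : X ≅ Y) (hY : w.le Y) : w.le X :=
  w.le_retract e.hom e.inv e.hom_inv_id hY

lemma ge_of_iso {X Y : C} (e : X ≅ Y) (hY : w.ge Y) : w.ge X :=
  w.ge_retract e.hom e.inv e.hom_inv_id hY

lemma eq_zero_of_leDeg_of_geDeg {k : ℤ} {X Y : C} (hX : w.leDeg k X)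
    (hY : w.geDeg (k + 1) Y) (φ : X ⟶ Y) : φ = 0 := by
  let e := (shiftFunctorAdd' C (-(k + 1)) 1 (-k) (by ring)).app Y
  have hφ : (shiftFunctor C (-k)).map φ = 0 := by
    rw [← cancel_mono e.hom, zero_comp]
    exact w.orth hX hY _
  exact (shiftFunctor C (-k)).map_injective (by rw [hφ, Functor.map_zero])

lemma exists_isWeightDecomp (k : ℤ) (M : C) :
    ∃ (A B : C) (f : A ⟶ M) (p : M ⟶ B) (δ : B ⟶ (shiftFunctor C (1 : ℤ)).obj A),
      w.IsWeightDecomp k f p δ := by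
  obtain ⟨X, Y, f, p, δ, hT, hX, hY⟩ := w.decomp ((shiftFunctor C (-k)).obj M)
  let T := (shiftFunctor (Triangle C) k).obj (Triangle.mk f p δ)
  let e : T.obj₂ ≅ M := (shiftFunctorCompIsoId C (-k) k (by ring)).app M
  refine ⟨T.obj₁, T.obj₃, T.mor₁ ≫ e.hom, e.inv ≫ T.mor₂, T.mor₃,
    Pretriangulated.distinguished_of_iso_obj₂ _ (Triangle.shift_distinguished _ hT k) e, ?_, ?_⟩
  · exact w.le_of_iso ((shiftFunctorCompIsoId C k (-k) (by ring)).app X) hX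
  · exact w.ge_of_iso ((shiftFunctorAdd' C k (-(k + 1)) (-1) (by ring)).app Y).symm hY

variable {w}

lemma IsWeightDecomp.exists_lift {k : ℤ} {A M B : C} {f : A ⟶ M} {p : M ⟶ B}
    {δ : B ⟶ (shiftFunctor C (1 : ℤ)).obj A} (hd : w.IsWeightDecomp k f p δ)
    {X : C} (hX : w.leDeg k X) (φ : X ⟶ M) : ∃ a : X ⟶ A, φ = a ≫ f :=
  Triangle.coyoneda_exact₂ _ hd.1 φ (w.eq_zero_of_leDeg_of_geDeg hX hd.2.2 _)

lemma IsWeightDecomp.exists_desc {k : ℤ} {A M B : C} {f : A ⟶ M} {p : M ⟶ B}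
    {δ : B ⟶ (shiftFunctor C (1 : ℤ)).obj A} (hd : w.IsWeightDecomp k f p δ)
    {Y : C} (hY : w.geDeg (k + 1) Y) (ψ : M ⟶ Y) : ∃ c : B ⟶ Y, ψ = p ≫ c :=
  Triangle.yoneda_exact₂ _ hd.1 ψ (w.eq_zero_of_leDeg_of_geDeg hd.2.1 hY _)

lemma KillsWeights.comp_eq_zero {m n : ℤ} {M N : C} {g : M ⟶ N} (hg : w.KillsWeights m n g)
    {A B A' B' : C} {f : A ⟶ M} {p : M ⟶ B} {δ : B ⟶ (shiftFunctor C (1 : ℤ)).obj A}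
    {f' : A' ⟶ N} {p' : N ⟶ B'} {δ' : B' ⟶ (shiftFunctor C (1 : ℤ)).obj A'}
    (hd : w.IsWeightDecomp n f p δ) (hd' : w.IsWeightDecomp (m - 1) f' p' δ') :
    f ≫ g ≫ p' = 0 := by
  obtain ⟨_, _, _, _, f₀, _, _, _, p₀', _, hd₀, hd₀', hz⟩ := hg
  obtain ⟨a, rfl⟩ := hd₀.exists_lift hd.2.1 f
  obtain ⟨c, rfl⟩ := hd₀'.exists_desc hd'.2.2 p'
  simp only [Category.assoc, reassoc_of% hz, zero_comp, comp_zero]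

lemma killsWeights_iff_forall_comp_eq_zero (m n : ℤ) {M N : C} (g : M ⟶ N) :
    w.KillsWeights m n g ↔
      ∀ ⦃A B A' B' : C⦄ (f : A ⟶ M) (p : M ⟶ B) (δ : B ⟶ (shiftFunctor C (1 : ℤ)).obj A)
        (f' : A' ⟶ N) (p' : N ⟶ B') (δ' : B' ⟶ (shiftFunctor C (1 : ℤ)).obj A'),
        w.IsWeightDecomp n f p δ → w.IsWeightDecomp (m - 1) f' p' δ' → f ≫ g ≫ p' = 0 := by
  refine ⟨fun hg _ _ _ _ _ _ _ _ _ _ hd hd' ↦ hg.comp_eq_zero hd hd', fun H ↦ ?_⟩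
  obtain ⟨A, B, f, p, δ, hd⟩ := w.exists_isWeightDecomp n M
  obtain ⟨A', B', f', p', δ', hd'⟩ := w.exists_isWeightDecomp (m - 1) N
  exact ⟨A, B, A', B', f, p, δ, f', p', δ', hd, hd', H f p δ f' p' δ' hd hd'⟩

end WeightStructure

theorem killsWeights_iff_forall_decomp_extends_general (w : WeightStructure C) (m n : ℤ)
    {M N : C} (g : M ⟶ N) :
    w.KillsWeights m n g ↔
      ∀ ⦃A B A' B' : C⦄ (f : A ⟶ M) (p : M ⟶ B) (δ : B ⟶ (shiftFunctor C (1 : ℤ)).obj A)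
        (f' : A' ⟶ N) (p' : N ⟶ B') (δ' : B' ⟶ (shiftFunctor C (1 : ℤ)).obj A'),
        w.IsWeightDecomp n f p δ → w.IsWeightDecomp (m - 1) f' p' δ' →
        ∃ (h : A ⟶ A') (j : B ⟶ B'),
          f ≫ g = h ≫ f' ∧ p ≫ j = g ≫ p' ∧
          δ ≫ (shiftFunctor C (1 : ℤ)).map h = j ≫ δ' := by
  rw [WeightStructure.killsWeights_iff_forall_comp_eq_zero]
  exact forall₄_congr fun _ _ _ _ ↦ forall₄_congr fun _ _ _ _ ↦ forall₄_congr fun _ _ hd hd' ↦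
    comp_mor₂_eq_zero_iff_exists_triangle_morphism hd.1 hd'.1 g

/-- Proposition 1.5 (condition (7)): `g` kills weights `m,…,n` if and only if EVERY
`n`-weight decomposition of `M` and EVERY `(m-1)`-weight decomposition of `N` can be
completed (by morphisms `h`, `j`) to a morphism of distinguished triangles `(h, g, j)`. -/
theorem killsWeights_iff_forall_decomp_extends (w : WeightStructure C) (m n : ℤ) (hmn : m ≤ n)
    {M N : C} (g : M ⟶ N) :
    w.KillsWeights m n g ↔
      ∀ ⦃A B A' B' : C⦄ (f : A ⟶ M) (p : M ⟶ B) (δ : B ⟶ (shiftFunctor C (1 : ℤ)).obj A)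
        (f' : A' ⟶ N) (p' : N ⟶ B') (δ' : B' ⟶ (shiftFunctor C (1 : ℤ)).obj A'),
        w.IsWeightDecomp n f p δ → w.IsWeightDecomp (m - 1) f' p' δ' →
        ∃ (h : A ⟶ A') (j : B ⟶ B'),
          f ≫ g = h ≫ f' ∧ p ≫ j = g ≫ p' ∧
          δ ≫ (shiftFunctor C (1 : ℤ)).map h = j ≫ δ' :=
  killsWeights_iff_forall_decomp_extends_general w m n g
end

section
/- Let C be an idempotent complete (Karoubian) triangulated category equipped with a weight structure w, let m ∈ ℤ, and let X →c M →p Y →δ X[1] be an m-weight decomposition of an object M. Suppose h : X → X and j : Y → Y are morphisms such that (h, id_M, j) is a morphism of distinguished triangles from this triangle to itself, and h is idempotent (h ∘ h = h). Then X splits as a direct sum X ≅ M_1 ⊕ M_0 such that h corresponds to the projection onto M_1, the object M_0 belongs to C_{w=m}, and the given distinguished triangle is isomorphic to the direct sum of a distinguished triangle M_1 → M → M_2 → M_1[1] which is an m-weight decomposition of M and the distinguished triangle M_0 → 0 → M_0[1] → M_0[1]. -/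
open CategoryTheory CategoryTheory.Limits CategoryTheory.Pretriangulated ZeroObject

universe v u

variable (C : Type u) [Category.{v} C] [HasZeroObject C] [Preadditive C] [HasShift C ℤ]
  [∀ n : ℤ, (shiftFunctor C n).Additive] [Pretriangulated C]

variable {C}

/-!
Write `X ≅ M₁ ⊞ M₀` with `h` the projection onto `M₁`; since `c = h ≫ c`, the map `c` vanishes on
`M₀`. Completing `c|M₁` to a distinguished triangle `M₁ → M → M₂ → M₁[1]` and adding the
contractible triangle `M₀ → 0 → M₀[1] → M₀[1]` yields a distinguished triangle that agrees with
`X → M → Y → X[1]` on its first morphism, hence is isomorphic to it. So `M₁, M₀` are retracts of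
`X ∈ C_{w≤m}` and `M₂, M₀[1]` are retracts of `Y ∈ C_{w≥m+1}`, which puts `M₀` in `C_{w=m}`.
-/

open CategoryTheory.Category CategoryTheory.Preadditive CategoryTheory.ObjectProperty

section IdempotentSplitting

variable {D : Type*} [Category D] [Preadditive D] [IsIdempotentComplete D]
  [HasBinaryBiproducts D]

lemma exists_iso_biprod_of_idempotent {X : D} (h : X ⟶ X) (hh : h ≫ h = h) :
    ∃ (X₁ X₀ : D) (e : X ≅ X₁ ⊞ X₀), h = e.hom ≫ biprod.fst ≫ biprod.inl ≫ e.inv := by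
  have hh' : (𝟙 X - h) ≫ (𝟙 X - h) = 𝟙 X - h := by simp [comp_sub, sub_comp, hh]
  obtain ⟨X₁, i₁, r₁, hir₁, hri₁⟩ := IsIdempotentComplete.idempotents_split X h hh
  obtain ⟨X₀, i₀, r₀, hir₀, hri₀⟩ := IsIdempotentComplete.idempotents_split X _ hh'
  have hi₁ : i₁ ≫ h = i₁ := by rw [← hri₁, reassoc_of% hir₁]
  have hi₀ : i₀ ≫ h = 0 := by
    rw [← id_comp i₀, assoc, ← hir₀, assoc, reassoc_of% hri₀, sub_comp, hh, id_comp, sub_self,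
      comp_zero]
  have hi₁r₀ : i₁ ≫ r₀ = 0 := by
    rw [← comp_id r₀, ← hir₀, reassoc_of% hri₀, sub_comp, comp_sub, id_comp, reassoc_of% hi₁,
      sub_self]
  have hi₀r₁ : i₀ ≫ r₁ = 0 := by
    rw [← comp_id r₁, ← hir₁, reassoc_of% hri₁, reassoc_of% hi₀, zero_comp]
  refine ⟨X₁, X₀,
    { hom := biprod.lift r₁ r₀
      inv := biprod.desc i₁ i₀
      hom_inv_id := by rw [biprod.lift_desc, hri₁, hri₀, add_sub_cancel]
      inv_hom_id := by
        apply biprod.hom_ext' <;> apply biprod.hom_ext <;> simp [hir₁, hir₀, hi₁r₀, hi₀r₁] },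
    by simp [hri₁]⟩

end IdempotentSplitting

open WalkingPair in
lemma isIso_pi_lift_of_eq_fst_snd {D : Type*} [Category D] [HasZeroMorphisms D]
    {f : WalkingPair → D} [HasProduct f] [HasBinaryBiproduct (f left) (f right)]
    (u : ∀ j, f left ⊞ f right ⟶ f j) (hl : u left = biprod.fst) (hr : u right = biprod.snd) :
    IsIso (Pi.lift u) := by
  refine ⟨biprod.lift (Pi.π f left) (Pi.π f right), ?_, ?_⟩
  · apply biprod.hom_ext <;> simp [hl, hr]
  · apply Pi.hom_ext
    rintro (_ | _) <;> simp [hl, hr]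

section BiprodTriangle

variable [HasBinaryBiproducts C]

noncomputable abbrev biprodTriangle (T₁ T₂ : Triangle C) : Triangle C where
  obj₁ := T₁.obj₁ ⊞ T₂.obj₁
  obj₂ := T₁.obj₂ ⊞ T₂.obj₂
  obj₃ := T₁.obj₃ ⊞ T₂.obj₃
  mor₁ := biprod.map T₁.mor₁ T₂.mor₁
  mor₂ := biprod.map T₁.mor₂ T₂.mor₂
  mor₃ := biprod.desc (T₁.mor₃ ≫ biprod.inl⟦(1 : ℤ)⟧') (T₂.mor₃ ≫ biprod.inr⟦(1 : ℤ)⟧')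

noncomputable def biprodTriangle.fst (T₁ T₂ : Triangle C) : biprodTriangle T₁ T₂ ⟶ T₁ where
  hom₁ := biprod.fst
  hom₂ := biprod.fst
  hom₃ := biprod.fst
  comm₃ := by apply biprod.hom_ext' <;> simp [← Functor.map_comp]

noncomputable def biprodTriangle.snd (T₁ T₂ : Triangle C) : biprodTriangle T₁ T₂ ⟶ T₂ where
  hom₁ := biprod.snd
  hom₂ := biprod.snd
  hom₃ := biprod.snd
  comm₃ := by apply biprod.hom_ext' <;> simp [← Functor.map_comp]

lemma biprodTriangle_distinguished {T₁ T₂ : Triangle C} (h₁ : T₁ ∈ distTriang C)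
    (h₂ : T₂ ∈ distTriang C) : biprodTriangle T₁ T₂ ∈ distTriang C := by
  let T : WalkingPair → Triangle C := fun j => WalkingPair.casesOn j T₁ T₂
  let π : ∀ j, biprodTriangle T₁ T₂ ⟶ T j :=
    fun j => WalkingPair.casesOn j (biprodTriangle.fst T₁ T₂) (biprodTriangle.snd T₁ T₂)
  have : IsIso (productTriangle.lift T π) := by
    apply Triangle.isIso_of_isIsos <;> exact isIso_pi_lift_of_eq_fst_snd _ rfl rfl
  exact isomorphic_distinguished _
    (productTriangle_distinguished T (by rintro (_ | _) <;> assumption)) _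
    (asIso (productTriangle.lift T π))

lemma biprodTriangle_contractible_distinguished {X₁ X₂ X₃ : C} {f : X₁ ⟶ X₂} {g : X₂ ⟶ X₃}
    {h : X₃ ⟶ X₁⟦(1 : ℤ)⟧} (hT : Triangle.mk f g h ∈ distTriang C) (Z : C) :
    Triangle.mk (biprod.map f (0 : Z ⟶ 0)) (biprod.map g (0 : 0 ⟶ Z⟦(1 : ℤ)⟧))
      (biprod.desc (h ≫ biprod.inl⟦(1 : ℤ)⟧') ((shiftFunctor C (1 : ℤ)).map biprod.inr)) ∈
        distTriang C := by
  have := biprodTriangle_distinguished hT (contractible_distinguished₂ Z)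
  dsimp only [biprodTriangle, Triangle.mk] at this ⊢
  rwa [id_comp] at this

end BiprodTriangle

namespace WeightStructure

variable (w : WeightStructure C)

instance (i : ℤ) : IsStableUnderRetracts (w.leDeg i) where
  of_retract h hY := w.le_retract _ _ (h.map (shiftFunctor C (-i))).retract hY

instance (i : ℤ) : IsStableUnderRetracts (w.geDeg i) where
  of_retract h hY := w.ge_retract _ _ (h.map (shiftFunctor C (-i))).retract hY

lemma geDeg_of_geDeg_shift {i n : ℤ} {X : C} (hX : w.geDeg (i + n) (X⟦n⟧)) : w.geDeg i X :=
  let e := (shiftFunctorAdd' C n (-(i + n)) (-i) (by omega)).app X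
  w.ge_retract e.hom e.inv e.hom_inv_id hX

end WeightStructure

theorem weightDecomp_idempotent_splits_general [IsIdempotentComplete C] [HasBinaryBiproducts C]
    (w : WeightStructure C) (m : ℤ) {X M Y : C}
    (c : X ⟶ M) (p : M ⟶ Y) (δ : Y ⟶ (shiftFunctor C (1 : ℤ)).obj X)
    (hd : w.IsWeightDecomp m c p δ)
    (h : X ⟶ X)
    (hsq₁ : c ≫ 𝟙 M = h ≫ c)
    (hidem : h ≫ h = h) :
    ∃ (M₁ M₀ M₂ : C) (e : X ≅ M₁ ⊞ M₀) (f₁ : M₁ ⟶ M) (p₁ : M ⟶ M₂)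
      (δ₁ : M₂ ⟶ (shiftFunctor C (1 : ℤ)).obj M₁),
      h = e.hom ≫ biprod.fst ≫ biprod.inl ≫ e.inv ∧
      w.leDeg m M₀ ∧ w.geDeg m M₀ ∧
      w.IsWeightDecomp m f₁ p₁ δ₁ ∧
      Nonempty (Triangle.mk c p δ ≅
        Triangle.mk (biprod.map f₁ (0 : M₀ ⟶ (0 : C)))
          (biprod.map p₁ (0 : (0 : C) ⟶ (shiftFunctor C (1 : ℤ)).obj M₀))
          (biprod.desc (δ₁ ≫ (shiftFunctor C (1 : ℤ)).map biprod.inl)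
            ((shiftFunctor C (1 : ℤ)).map biprod.inr))) := by
  obtain ⟨hT, hX, hY⟩ := hd
  obtain ⟨M₁, M₀, e, rfl⟩ := exists_iso_biprod_of_idempotent h hidem
  obtain ⟨M₂, p₁, δ₁, hT₁⟩ := distinguished_cocone_triangle (biprod.inl ≫ e.inv ≫ c)
  have hsum := biprodTriangle_contractible_distinguished hT₁ M₀
  have hc : c ≫ biprod.inl = e.hom ≫ biprod.map (biprod.inl ≫ e.inv ≫ c) (0 : M₀ ⟶ 0) := by
    apply biprod.hom_ext
    · simpa using hsq₁
    · simp
  let E := isoTriangleOfIso₁₂ _ _ hT hsum e (isoBiprodZero (isZero_zero C)) hc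
  have hXsum := prop_of_iso (w.leDeg m) e hX
  have hYsum := prop_of_iso (w.geDeg (m + 1)) (Triangle.π₃.mapIso E) hY
  exact ⟨M₁, M₀, M₂, e, _, p₁, δ₁, rfl, IsStableUnderRetracts.of_biprod_right _ hXsum,
    w.geDeg_of_geDeg_shift (IsStableUnderRetracts.of_biprod_right _ hYsum),
    ⟨hT₁, IsStableUnderRetracts.of_biprod_left _ hXsum,
      IsStableUnderRetracts.of_biprod_left _ hYsum⟩, ⟨E⟩⟩

/-- Proposition 1.2.1(6): in a Karoubian triangulated category, if `(h, 𝟙 M, j)` is an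
endomorphism of an `m`-weight decomposition `X → M → Y → X[1]` with `h` idempotent, then `X`
splits as `M₁ ⊞ M₀` with `h` the projection onto `M₁`, `M₀ ∈ C_{w=m}`, and the given triangle
is isomorphic to the direct sum of an `m`-weight decomposition `M₁ → M → M₂ → M₁[1]` of `M`
and the distinguished triangle `M₀ → 0 → M₀[1] → M₀[1]`. -/
theorem weightDecomp_idempotent_splits [IsIdempotentComplete C] [HasBinaryBiproducts C]
    (w : WeightStructure C) (m : ℤ) {X M Y : C}
    (c : X ⟶ M) (p : M ⟶ Y) (δ : Y ⟶ (shiftFunctor C (1 : ℤ)).obj X)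
    (hd : w.IsWeightDecomp m c p δ)
    (h : X ⟶ X) (j : Y ⟶ Y)
    (hsq₁ : c ≫ 𝟙 M = h ≫ c) (hsq₂ : p ≫ j = 𝟙 M ≫ p)
    (hsq₃ : δ ≫ (shiftFunctor C (1 : ℤ)).map h = j ≫ δ)
    (hidem : h ≫ h = h) :
    ∃ (M₁ M₀ M₂ : C) (e : X ≅ M₁ ⊞ M₀) (f₁ : M₁ ⟶ M) (p₁ : M ⟶ M₂)
      (δ₁ : M₂ ⟶ (shiftFunctor C (1 : ℤ)).obj M₁),
      h = e.hom ≫ biprod.fst ≫ biprod.inl ≫ e.inv ∧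
      w.leDeg m M₀ ∧ w.geDeg m M₀ ∧
      w.IsWeightDecomp m f₁ p₁ δ₁ ∧
      Nonempty (Triangle.mk c p δ ≅
        Triangle.mk (biprod.map f₁ (0 : M₀ ⟶ (0 : C)))
          (biprod.map p₁ (0 : (0 : C) ⟶ (shiftFunctor C (1 : ℤ)).obj M₀))
          (biprod.desc (δ₁ ≫ (shiftFunctor C (1 : ℤ)).map biprod.inl)
            ((shiftFunctor C (1 : ℤ)).map biprod.inr))) :=
  weightDecomp_idempotent_splits_general w m c p δ hd h hsq₁ hidem
end

section
/- Let C be a triangulated category equipped with a weight structure w, let m ∈ ℤ, and let g : M → M' be a morphism with M' ∈ C_{w≥m}. Then for any (m−1)-weight decomposition w_{≤m−1}M → M →a w_{≥m}M → (w_{≤m−1}M)[1] of M, the morphism g factors through a: there exists j : w_{≥m}M → M' with j ∘ a = g. -/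
open CategoryTheory CategoryTheory.Limits CategoryTheory.Pretriangulated ZeroObject

universe v u

variable (C : Type u) [Category.{v} C] [HasZeroObject C] [Preadditive C] [HasShift C ℤ]
  [∀ n : ℤ, (shiftFunctor C n).Additive] [Pretriangulated C]

variable {C}

/-- Proposition 1.2.1(7): if `M' ∈ C_{w≥m}` then any `g : M ⟶ M'` factors through the map
`a : M ⟶ w_{≥m}M` of any `(m-1)`-weight decomposition of `M`. -/
theorem factors_through_ge_part (w : WeightStructure C) (m : ℤ) {M M' : C} (g : M ⟶ M')
    (hM' : w.geDeg m M')
    {A B : C} (f : A ⟶ M) (a : M ⟶ B) (δ : B ⟶ (shiftFunctor C (1 : ℤ)).obj A)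
    (hd : w.IsWeightDecomp (m - 1) f a δ) :
    ∃ j : B ⟶ M', a ≫ j = g := by
  obtain ⟨hT, hA, hB⟩ := hd
  have h0 : f ≫ g = 0 := by
    have h1 := w.orth hA hM'
      ((shiftFunctor C (-(m - 1))).map (f ≫ g) ≫
        ((shiftFunctorAdd' C (-m) (1 : ℤ) (-(m - 1)) (by ring)).hom.app M'))
    have h2 : (shiftFunctor C (-(m - 1))).map (f ≫ g) = 0 := by
      rw [← cancel_mono ((shiftFunctorAdd' C (-m) (1 : ℤ) (-(m - 1)) (by ring)).hom.app M')]
      simpa using h1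
    exact (shiftFunctor C (-(m - 1))).map_injective (by simpa using h2)
  obtain ⟨j, hj⟩ := Triangle.yoneda_exact₂ _ hT g h0
  exact ⟨j, hj.symm⟩
end

section
/- Let C be a triangulated category equipped with a weight structure w, and let m ≤ n < n' be integers. If an object O of C is without weights m,…,n and also without weights n+1,…,n', then O is without weights m,…,n'. -/
open CategoryTheory CategoryTheory.Limits CategoryTheory.Pretriangulated ZeroObject

universe v u

variable (C : Type u) [Category.{v} C] [HasZeroObject C] [Preadditive C] [HasShift C ℤ]
  [∀ n : ℤ, (shiftFunctor C n).Additive] [Pretriangulated C]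

variable {C}

namespace WeightStructure

variable (w : WeightStructure C)

theorem hom_eq_zero_of_leDeg_of_geDeg {n : ℤ} {X Y : C} (hX : w.leDeg n X)
    (hY : w.geDeg (n + 1) Y) (f : X ⟶ Y) : f = 0 := by
  -- Shifting by `-n` turns `f` into a map `X[-n] ⟶ Y[-(n+1)][1]`, which orthogonality kills.
  let e := (shiftFunctorAdd' C (-(n + 1)) 1 (-n) (by ring)).app Y
  have hshift : (shiftFunctor C (-n)).map f ≫ e.hom = 0 := w.orth hX hY _
  apply (shiftFunctor C (-n)).map_injective
  rw [← cancel_mono e.hom, hshift, Functor.map_zero, zero_comp]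

variable {w}

theorem IsWeightDecomp.exists_eq_comp_of_comp_eq_zero {n : ℤ} {A M B : C} {f : A ⟶ M}
    {p : M ⟶ B} {δ : B ⟶ (shiftFunctor C (1 : ℤ)).obj A} (hd : w.IsWeightDecomp n f p δ)
    {X : C} (g : X ⟶ M) (hg : g ≫ p = 0) : ∃ a : X ⟶ A, g = a ≫ f :=
  Triangle.coyoneda_exact₂ _ hd.1 g hg

theorem IsWeightDecomp.exists_eq_comp_of_leDeg {n : ℤ} {A M B : C} {f : A ⟶ M}
    {p : M ⟶ B} {δ : B ⟶ (shiftFunctor C (1 : ℤ)).obj A} (hd : w.IsWeightDecomp n f p δ)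
    {X : C} (hX : w.leDeg n X) (g : X ⟶ M) : ∃ a : X ⟶ A, g = a ≫ f :=
  hd.exists_eq_comp_of_comp_eq_zero g (w.hom_eq_zero_of_leDeg_of_geDeg hX hd.2.2 _)

end WeightStructure

theorem withoutWeights_glue_general (w : WeightStructure C) (m n n' : ℤ)
    (O : C) (hO₁ : w.WithoutWeights m n O) (hO₂ : w.WithoutWeights (n + 1) n' O) :
    w.WithoutWeights m n' O := by
  obtain ⟨A₁, B₁, A₁', B₁', f₁, p₁, δ₁, f₁', p₁', δ₁', hd₁, hd₁', hz₁⟩ := hO₁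
  obtain ⟨A₂, B₂, A₂', B₂', f₂, p₂, δ₂, f₂', p₂', δ₂', hd₂, hd₂', hz₂⟩ := hO₂
  rw [add_sub_cancel_right] at hd₂'
  rw [Category.id_comp] at hz₁ hz₂
  -- `w_{≤n'}O → O` factors through `w_{≤n}O → O`, along which the weights `m,…,n` die.
  obtain ⟨α, rfl⟩ := hd₂'.exists_eq_comp_of_comp_eq_zero f₂ hz₂
  obtain ⟨β, rfl⟩ := hd₁.exists_eq_comp_of_leDeg hd₂'.2.1 f₂'
  refine ⟨A₂, B₂, A₁', B₁', _, p₂, δ₂, f₁', p₁', δ₁', hd₂, hd₁', ?_⟩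
  simp only [Category.id_comp, Category.assoc, hz₁, comp_zero]

/-- Theorem 2.1.1(6): if `O` is without weights `m,…,n` and without weights `n+1,…,n'`
(where `m ≤ n < n'`), then `O` is without weights `m,…,n'`. -/
theorem withoutWeights_glue (w : WeightStructure C) (m n n' : ℤ) (h1 : m ≤ n) (h2 : n < n')
    (O : C) (hO₁ : w.WithoutWeights m n O) (hO₂ : w.WithoutWeights (n + 1) n' O) :
    w.WithoutWeights m n' O :=
  withoutWeights_glue_general w m n n' O hO₁ hO₂
end

section
/- Let C be an idempotent complete (Karoubian) triangulated category equipped with a weight structure w, and let m ≤ n be integers. If an object O of C is without weights m,…,n, then there exists a distinguished triangle X → O → Y → X[1] with X ∈ C_{w≤m−1} and Y ∈ C_{w≥n+1}. -/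
open CategoryTheory CategoryTheory.Limits CategoryTheory.Pretriangulated ZeroObject

universe v u

variable (C : Type u) [Category.{v} C] [HasZeroObject C] [Preadditive C] [HasShift C ℤ]
  [∀ n : ℤ, (shiftFunctor C n).Additive] [Pretriangulated C]

variable {C}

/-!
Take an `n`-weight decomposition `A → O → B` and an `(m-1)`-weight decomposition
`A' → O → B'`. The hypothesis lets `f : A → O` factor through `A'`, and orthogonality lets
`A' → O` factor through `A`; this yields an endomorphism `u` of `A`, factoring through `A'`,
with `u ≫ f = f`. Then `u - u²` factors through `B[-1]`, and since `Hom(A', B[-1]) = 0`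
(this is where `m ≤ n` enters) it has square zero, so `3u² - 2u³` is an idempotent that still
fixes `f` and factors through `A'`. Its image `X` is a retract of `A'`, and the cone `Y` of
`X → O` is a retract of `B`.
-/

namespace WeightStructure

variable (w : WeightStructure C)

lemma le_of_retract {X Y : C} (h : Retract X Y) (hY : w.le Y) : w.le X :=
  w.le_retract h.i h.r h.retract hY

lemma ge_of_retract {X Y : C} (h : Retract X Y) (hY : w.ge Y) : w.ge X :=
  w.ge_retract h.i h.r h.retract hY

lemma leDeg_of_retract {i : ℤ} {X Y : C} (h : Retract X Y) (hY : w.leDeg i Y) :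
    w.leDeg i X :=
  w.le_of_retract (h.map (shiftFunctor C (-i))) hY

lemma geDeg_of_retract {i : ℤ} {X Y : C} (h : Retract X Y) (hY : w.geDeg i Y) :
    w.geDeg i X :=
  w.ge_of_retract (h.map (shiftFunctor C (-i))) hY

lemma geDeg_shift (k : ℤ) {j : ℤ} {X : C} (h : w.geDeg j X) :
    w.geDeg (j + k) ((shiftFunctor C k).obj X) :=
  w.ge_of_retract ((shiftFunctorAdd' C k (-(j + k)) (-j) (by ring)).app X).symm.retract h

lemma geDeg_sub_one {j : ℤ} {X : C} (h : w.geDeg j X) : w.geDeg (j - 1) X :=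
  w.ge_of_retract ((shiftFunctorAdd' C (-j) 1 (-(j - 1)) (by ring)).app X).retract
    (w.ge_shift h)

lemma geDeg_of_le {i j : ℤ} (hij : i ≤ j) {X : C} (h : w.geDeg j X) : w.geDeg i X := by
  induction i, hij using Int.leInductionDown with
  | base => exact h
  | pred i _ ih => exact w.geDeg_sub_one ih

lemma hom_eq_zero_of_lt {i j : ℤ} (hij : i < j) {X Y : C} (hX : w.leDeg i X)
    (hY : w.geDeg j Y) (φ : X ⟶ Y) : φ = 0 := by
  let e := (shiftFunctorAdd' C (-(i + 1)) 1 (-i) (by ring)).app Y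
  have h : (shiftFunctor C (-i)).map φ ≫ e.hom = 0 :=
    w.orth hX (w.geDeg_of_le (by omega) hY) _
  apply (shiftFunctor C (-i)).map_injective
  rw [← cancel_mono e.hom, h, Functor.map_zero, zero_comp]

end WeightStructure

theorem isIdempotentElem_three_smul_sq_sub_two_smul_cube {R : Type*} [Ring R] {u : R}
    (h : (u - u ^ 2) ^ 2 = 0) : IsIdempotentElem (3 • u ^ 2 - 2 • u ^ 3) := by
  have key : (3 • u ^ 2 - 2 • u ^ 3) * (3 • u ^ 2 - 2 • u ^ 3) - (3 • u ^ 2 - 2 • u ^ 3)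
      = (u - u ^ 2) ^ 2 * (4 • u ^ 2 - 4 • u - 3) := by noncomm_ring
  rwa [h, zero_mul, sub_eq_zero] at key

theorem CategoryTheory.End.pow_comp_eq_self {D : Type*} [Category D] {A O : D} {u : End A}
    {f : A ⟶ O} (h : u ≫ f = f) (k : ℕ) : (u ^ k) ≫ f = f := by
  induction k with
  | zero => exact Category.id_comp f
  | succ k ih => rw [pow_succ, End.mul_def, Category.assoc, ih, h]

def CategoryTheory.Retract.ofFactorization {D : Type*} [Category D] {X Y Z : D}
    (h : Retract X Y) {x : Y ⟶ Z} {y : Z ⟶ Y} (hxy : h.r ≫ h.i = x ≫ y) : Retract X Z where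
  i := h.i ≫ x
  r := y ≫ h.r
  retract := by rw [Category.assoc, ← Category.assoc x, ← hxy]; simp

namespace CategoryTheory.Pretriangulated

theorem nonempty_retract_obj₃ {T T' : Triangle C} (hT : T ∈ distTriang C)
    (hT' : T' ∈ distTriang C) (h₁ : Retract T'.obj₁ T.obj₁) (h₂ : Retract T'.obj₂ T.obj₂)
    (comm_i : T'.mor₁ ≫ h₂.i = h₁.i ≫ T.mor₁) (comm_r : T.mor₁ ≫ h₂.r = h₁.r ≫ T'.mor₁) :
    Nonempty (Retract T'.obj₃ T.obj₃) := by
  obtain ⟨i₃, hi₂, hi₃⟩ := complete_distinguished_triangle_morphism _ _ hT' hT _ _ comm_i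
  obtain ⟨r₃, hr₂, hr₃⟩ := complete_distinguished_triangle_morphism _ _ hT hT' _ _ comm_r
  let φ : T' ⟶ T' :=
    Triangle.homMk _ _ _ _ _ comm_i hi₂ hi₃ ≫ Triangle.homMk _ _ _ _ _ comm_r hr₂ hr₃
  have : IsIso (i₃ ≫ r₃) := isIso₃_of_isIso₁₂ φ hT' hT'
    (by simp [φ]; infer_instance) (by simp [φ]; infer_instance)
  exact ⟨⟨i₃, r₃ ≫ inv (i₃ ≫ r₃), by rw [← Category.assoc, IsIso.hom_inv_id]⟩⟩

variable {A A' O B : C} {f : A ⟶ O} {p : O ⟶ B} {δ : B ⟶ (shiftFunctor C (1 : ℤ)).obj A}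

theorem sq_self_sub_sq_eq_zero (hT : Triangle.mk f p δ ∈ distTriang C) {a : A ⟶ A'}
    {c : A' ⟶ A} {u : End A} (hu : u = a ≫ c) (huf : u ≫ f = f)
    (hc : ∀ s : A' ⟶ (shiftFunctor C (-1 : ℤ)).obj B, s = 0) : (u - u ^ 2) ^ 2 = 0 := by
  have hN : (u - u ^ 2) ≫ f = 0 := by
    rw [Preadditive.sub_comp, End.pow_comp_eq_self huf, huf, sub_self]
  let j : (shiftFunctor C (-1 : ℤ)).obj B ⟶ A := (Triangle.mk f p δ).invRotate.mor₁
  obtain ⟨s, hs⟩ : ∃ s : A ⟶ (shiftFunctor C (-1 : ℤ)).obj B, u - u ^ 2 = s ≫ j :=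
    Triangle.coyoneda_exact₂ _ (inv_rot_of_distTriang _ hT) _ hN
  have hcs : c ≫ s = 0 := hc _
  have hNs : (u - u ^ 2) ≫ s = 0 := by
    rw [hu, sq, End.mul_def, Preadditive.sub_comp]
    simp only [Category.assoc, hcs, comp_zero, sub_self]
  calc (u - u ^ 2) ^ 2 = (u - u ^ 2) ≫ (u - u ^ 2) := by rw [sq]; rfl
    _ = ((u - u ^ 2) ≫ s) ≫ j := by rw [Category.assoc, ← hs]
    _ = 0 := by rw [hNs, zero_comp]

theorem exists_idempotent_comp_eq_self_of_factor (hT : Triangle.mk f p δ ∈ distTriang C)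
    {a : A ⟶ A'} {c : A' ⟶ A} (hf : (a ≫ c) ≫ f = f)
    (hc : ∀ s : A' ⟶ (shiftFunctor C (-1 : ℤ)).obj B, s = 0) :
    ∃ (e : A ⟶ A) (x : A ⟶ A'), e ≫ e = e ∧ e ≫ f = f ∧ e = x ≫ c := by
  obtain ⟨u, hu⟩ : ∃ u : End A, u = a ≫ c := ⟨_, rfl⟩
  rw [← hu] at hf
  refine ⟨3 • u ^ 2 - 2 • u ^ 3, 3 • (u ≫ a) - 2 • ((u ^ 2) ≫ a),
    isIdempotentElem_three_smul_sq_sub_two_smul_cube (sq_self_sub_sq_eq_zero hT hu hf hc), ?_, ?_⟩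
  · rw [Preadditive.sub_comp, Preadditive.nsmul_comp, Preadditive.nsmul_comp,
      End.pow_comp_eq_self hf, End.pow_comp_eq_self hf]
    abel
  · rw [Preadditive.sub_comp, Preadditive.nsmul_comp, Preadditive.nsmul_comp, Category.assoc,
      Category.assoc, ← hu, pow_succ' u 2, sq, End.mul_def, End.mul_def]

theorem exists_distTriang_retract_of_idempotent [IsIdempotentComplete C]
    (hT : Triangle.mk f p δ ∈ distTriang C) {e : A ⟶ A} (he : e ≫ e = e) (hef : e ≫ f = f) :
    ∃ (A₀ Y : C) (f₀ : A₀ ⟶ O) (p₀ : O ⟶ Y) (δ₀ : Y ⟶ (shiftFunctor C (1 : ℤ)).obj A₀)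
      (h : Retract A₀ A), h.r ≫ h.i = e ∧ Triangle.mk f₀ p₀ δ₀ ∈ distTriang C ∧
        Nonempty (Retract Y B) := by
  obtain ⟨A₀, i, r, hir, hri⟩ := IsIdempotentComplete.idempotents_split A e he
  obtain ⟨Y, p₀, δ₀, hD⟩ := distinguished_cocone_triangle (i ≫ f)
  refine ⟨A₀, Y, i ≫ f, p₀, δ₀, ⟨i, r, hir⟩, hri, hD,
    nonempty_retract_obj₃ hT hD ⟨i, r, hir⟩ (Retract.refl O) ?_ ?_⟩
  · exact Category.comp_id _
  · change f ≫ 𝟙 O = r ≫ i ≫ f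
    rw [Category.comp_id, ← Category.assoc, hri, hef]

end CategoryTheory.Pretriangulated

/-- Theorem 2.1.1(8): in a Karoubian triangulated category, any object `O` without weights
`m,…,n` admits a decomposition avoiding weights `m,…,n`, i.e. a distinguished triangle
`X → O → Y → X[1]` with `X ∈ C_{w≤m-1}` and `Y ∈ C_{w≥n+1}`. -/
theorem withoutWeights_has_avoiding_decomposition [IsIdempotentComplete C]
    (w : WeightStructure C) (m n : ℤ) (hmn : m ≤ n) (O : C)
    (hO : w.WithoutWeights m n O) :
    ∃ (X Y : C) (f : X ⟶ O) (p : O ⟶ Y) (δ : Y ⟶ (shiftFunctor C (1 : ℤ)).obj X),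
      Triangle.mk f p δ ∈ (distTriang C) ∧ w.leDeg (m - 1) X ∧ w.geDeg (n + 1) Y := by
  obtain ⟨A, B, A', B', f, p, δ, f', p', δ', ⟨hT, -, hB⟩, ⟨hT', hA', -⟩, hz⟩ := hO
  obtain ⟨a, ha⟩ : ∃ a : A ⟶ A', f = a ≫ f' :=
    Triangle.coyoneda_exact₂ _ hT' f (by rwa [Category.id_comp] at hz)
  obtain ⟨c, hc⟩ : ∃ c : A' ⟶ A, f' = c ≫ f := Triangle.coyoneda_exact₂ _ hT f'
    (w.hom_eq_zero_of_lt (by omega : m - 1 < n + 1) hA' hB _)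
  have hac : (a ≫ c) ≫ f = f := by rw [Category.assoc, ← hc, ← ha]
  obtain ⟨e, x, he, hef, hex⟩ := exists_idempotent_comp_eq_self_of_factor hT hac
    (w.hom_eq_zero_of_lt (by omega : m - 1 < n + 1 + -1) hA' (w.geDeg_shift (-1) hB))
  obtain ⟨A₀, Y, f₀, p₀, δ₀, h, hhe, hD, ⟨hY⟩⟩ :=
    exists_distTriang_retract_of_idempotent hT he hef
  exact ⟨A₀, Y, f₀, p₀, δ₀, hD, w.leDeg_of_retract (h.ofFactorization (hhe.trans hex)) hA',
    w.geDeg_of_retract hY hB⟩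
end
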